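/- arXiv:2510.05429 — 5 statements merged into one kernel-verified Lean document; each statement's English description precedes it below -/
import Mathlib

section
/- Suppose all agents have identical additive valuations with strictly positive weights w_g > 0. If an allocation A is not EFX, then there exists a single-transfer neighbor A' of A (obtained by moving one good from its current owner to another agent) with Φ(A') < Φ(A), where Φ(A) = Σ_{k=1}^n (Y_k − μ)^2. -/
open Finset

/-- The bundle of agent `k` under allocation `A`. -/
def bundle {n m : ℕ} (A : Fin m → Fin n) (k : Fin n) : Finset (Fin m) :=
  Finset.univ.filter (fun g => A g = k)

/-- Additive utility of agent `i` for a bundle `S`. -/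
def util {n m : ℕ} (v : Fin n → Fin m → ℝ) (i : Fin n) (S : Finset (Fin m)) : ℝ :=
  ∑ g ∈ S, v i g

/-- An allocation is EFX if for all agents `i, j` and every good `g ∈ A_j`,
`u_i(A_i) ≥ u_i(A_j \ {g})`. -/
def EFX {n m : ℕ} (v : Fin n → Fin m → ℝ) (A : Fin m → Fin n) : Prop :=
  ∀ i j : Fin n, ∀ g ∈ bundle A j, util v i ((bundle A j).erase g) ≤ util v i (bundle A i)

/-- `Y_k`: the total weight of agent `k`'s bundle. -/
def Y {n m : ℕ} (w : Fin m → ℝ) (A : Fin m → Fin n) (k : Fin n) : ℝ :=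
  ∑ g ∈ bundle A k, w g

/-- The potential `Φ(A) = Σ_k (Y_k − μ)^2` where `μ = (1/n) Σ_{g∈M} w_g`. -/
noncomputable def Phi {n m : ℕ} (w : Fin m → ℝ) (A : Fin m → Fin n) : ℝ :=
  ∑ k : Fin n, (Y w A k - (∑ g : Fin m, w g) / n) ^ 2

/-- `A'` is a single-transfer neighbor of `A`: it differs from `A` by the transfer
of a single good from its owner in `A` to another agent. -/
def Neighbor {n m : ℕ} (A A' : Fin m → Fin n) : Prop :=
  ∃ (g : Fin m) (i : Fin n), i ≠ A g ∧ A' = Function.update A g i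

/-- with identical additive valuations and strictly positive weights,
if an allocation is not EFX then some single-transfer neighbor strictly decreases `Φ`. -/
theorem exists_neighbor_decreasing_Phi {n m : ℕ} (w : Fin m → ℝ) (hw : ∀ g, 0 < w g)
    (v : Fin n → Fin m → ℝ) (hv : ∀ i g, v i g = w g)
    (A : Fin m → Fin n) (hA : ¬ EFX v A) :
    ∃ A' : Fin m → Fin n, Neighbor A A' ∧ Phi w A' < Phi w A := by
  simp only [EFX, not_forall, not_le] at hA
  obtain ⟨i, j, g, hg, hlt⟩ := hA
  have hAg : A g = j := by simpa [bundle] using hg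
  -- rewrite utilities as sums of weights
  have hutil : ∀ S : Finset (Fin m), util v i S = ∑ x ∈ S, w x := by
    intro S; simp [util, hv]
  rw [hutil, hutil] at hlt
  have herase : ∑ x ∈ (bundle A j).erase g, w x = Y w A j - w g := by
    have := Finset.add_sum_erase _ w hg
    simp only [Y]; linarith
  have hYlt : Y w A i < Y w A j - w g := by
    rw [herase] at hlt; simpa [Y] using hlt
  have hij : i ≠ j := by
    rintro rfl
    have hle : ∑ x ∈ (bundle A i).erase g, w x ≤ Y w A i :=
      Finset.sum_le_sum_of_subset_of_nonneg (Finset.erase_subset _ _)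
        (fun x _ _ => (hw x).le)
    rw [herase] at hle
    have := hw g; linarith
  set A' := Function.update A g i with hA'
  have hgi : A g ≠ i := by rw [hAg]; exact (Ne.symm hij)
  -- bundles of A'
  have hbi : bundle A' i = insert g (bundle A i) := by
    ext x
    rcases eq_or_ne x g with rfl | hx
    · simp [bundle, hA', Function.update_self, hij]
    · simp [bundle, hA', Function.update_of_ne hx, hx]
  have hbj : bundle A' j = (bundle A j).erase g := by
    ext x
    rcases eq_or_ne x g with rfl | hx
    · simp [bundle, hA', Function.update_self, hij]
    · simp [bundle, hA', Function.update_of_ne hx, hx]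
  have hbk : ∀ k : Fin n, k ≠ i → k ≠ j → bundle A' k = bundle A k := by
    intro k hki hkj
    ext x
    rcases eq_or_ne x g with rfl | hx
    · simp [bundle, hA', Function.update_self, Ne.symm hki, hAg, Ne.symm hkj]
    · simp [bundle, hA', Function.update_of_ne hx]
  have hgnot : g ∉ bundle A i := by simp [bundle, hAg, Ne.symm hij]
  have hYi : Y w A' i = Y w A i + w g := by
    rw [Y, hbi, Finset.sum_insert hgnot]; rw [Y]; ring
  have hYj : Y w A' j = Y w A j - w g := by
    rw [Y, hbj, herase]
  have hYk : ∀ k : Fin n, k ≠ i → k ≠ j → Y w A' k = Y w A k := by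
    intro k hki hkj; rw [Y, hbk k hki hkj, Y]
  refine ⟨A', ⟨g, i, by rw [hAg]; exact hij, rfl⟩, ?_⟩
  set μ := (∑ g : Fin m, w g) / n with hμ
  have hdiff : Phi w A' - Phi w A =
      ∑ k : Fin n, ((Y w A' k - μ) ^ 2 - (Y w A k - μ) ^ 2) := by
    rw [Phi, Phi, Finset.sum_sub_distrib]
  have hzero : ∀ k ∈ (Finset.univ : Finset (Fin n)), k ∉ ({i, j} : Finset (Fin n)) →
      ((Y w A' k - μ) ^ 2 - (Y w A k - μ) ^ 2) = 0 := by
    intro k _ hk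
    simp only [Finset.mem_insert, Finset.mem_singleton, not_or] at hk
    rw [hYk k hk.1 hk.2]; ring
  have hsum : ∑ k : Fin n, ((Y w A' k - μ) ^ 2 - (Y w A k - μ) ^ 2)
      = ∑ k ∈ ({i, j} : Finset (Fin n)), ((Y w A' k - μ) ^ 2 - (Y w A k - μ) ^ 2) :=
    (Finset.sum_subset (Finset.subset_univ _) hzero).symm
  rw [Finset.sum_pair hij] at hsum
  have hkey : Phi w A' - Phi w A = 2 * w g * (Y w A i - Y w A j + w g) := by
    rw [hdiff, hsum, hYi, hYj]; ring
  have hpos := hw g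
  nlinarith [hkey, hYlt, hpos]
end

section
/- Suppose all agents have identical additive valuations with strictly positive weights w_g > 0. Every allocation A that is a local minimum of the potential Φ with respect to the single-transfer neighborhood — that is, no single-transfer neighbor A' of A satisfies Φ(A') < Φ(A) — is an EFX allocation. -/
open Finset

lemma bundle_update_ne {n m : ℕ} (A : Fin m → Fin n) (g : Fin m) (i k : Fin n)
    (hk1 : k ≠ i) (hk2 : k ≠ A g) :
    bundle (Function.update A g i) k = bundle A k := by
  ext x
  simp only [bundle, mem_filter, mem_univ, true_and, Function.update_apply]
  by_cases hx : x = g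
  · subst hx; simp [hk1.symm, hk2.symm]
  · simp [hx]

lemma bundle_update_self {n m : ℕ} (A : Fin m → Fin n) (g : Fin m) (i : Fin n)
    (h : A g ≠ i) :
    bundle (Function.update A g i) i = insert g (bundle A i) := by
  ext x
  simp only [bundle, mem_filter, mem_univ, true_and, Function.update_apply, mem_insert]
  by_cases hx : x = g
  · simp [hx]
  · simp [hx]

lemma bundle_update_old {n m : ℕ} (A : Fin m → Fin n) (g : Fin m) (i : Fin n)
    (h : i ≠ A g) :
    bundle (Function.update A g i) (A g) = (bundle A (A g)).erase g := by
  ext x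
  simp only [bundle, mem_filter, mem_univ, true_and, Function.update_apply, mem_erase]
  by_cases hx : x = g
  · subst hx; simp [h]
  · simp [hx]

/-- with identical additive valuations and strictly positive weights,
every allocation that is a local minimum of `Φ` under the single-transfer
neighborhood (no neighbor has strictly smaller `Φ`) is EFX. -/
theorem localMin_Phi_is_EFX {n m : ℕ} (w : Fin m → ℝ) (hw : ∀ g, 0 < w g)
    (v : Fin n → Fin m → ℝ) (hv : ∀ i g, v i g = w g)
    (A : Fin m → Fin n)
    (hmin : ¬ ∃ A' : Fin m → Fin n, Neighbor A A' ∧ Phi w A' < Phi w A) :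
    EFX v A := by
  by_contra hEFX
  simp only [EFX, not_forall] at hEFX
  obtain ⟨i, j, g, hg, hlt⟩ := hEFX
  push_neg at hlt
  have hgj : A g = j := (Finset.mem_filter.mp hg).2
  subst hgj
  have hutil : ∀ S : Finset (Fin m), util v i S = ∑ x ∈ S, w x := fun S =>
    Finset.sum_congr rfl (fun x _ => hv i x)
  have herase : ∑ x ∈ (bundle A (A g)).erase g, w x = Y w A (A g) - w g := by
    rw [Y, ← Finset.sum_erase_add _ _ hg]; ring
  have hYlt : Y w A i < Y w A (A g) - w g := by
    have h2 := hlt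
    rw [hutil, hutil, herase] at h2
    exact h2
  have hij : i ≠ A g := by
    rintro rfl
    have := hw g; linarith
  set A' := Function.update A g i with hA'
  apply hmin
  refine ⟨A', ⟨g, i, hij, rfl⟩, ?_⟩
  have hgni : g ∉ bundle A i := by
    simp only [bundle, mem_filter, mem_univ, true_and]
    exact fun h => hij h.symm
  have hYi : Y w A' i = Y w A i + w g := by
    rw [Y, Y, hA', bundle_update_self A g i (Ne.symm hij), Finset.sum_insert hgni]
    ring
  have hYj : Y w A' (A g) = Y w A (A g) - w g := by
    rw [Y, Y, hA', bundle_update_old A g i hij, ← Finset.sum_erase_add _ _ hg]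
    ring
  have key : Phi w A' < Phi w A := by
    rw [Phi, Phi,
      ← Finset.sum_sdiff (Finset.subset_univ ({i, A g} : Finset (Fin n))),
      ← Finset.sum_sdiff (Finset.subset_univ ({i, A g} : Finset (Fin n)))]
    apply add_lt_add_of_le_of_lt
    · apply le_of_eq
      apply Finset.sum_congr rfl
      intro k hk
      simp only [Finset.mem_sdiff, Finset.mem_insert, Finset.mem_singleton] at hk
      rw [Y, hA', bundle_update_ne A g i k (fun h => hk.2 (Or.inl h))
        (fun h => hk.2 (Or.inr h)), ← Y]
    · rw [Finset.sum_pair hij, Finset.sum_pair hij, hYi, hYj]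
      nlinarith [mul_pos (hw g) (sub_pos.mpr hYlt)]
  exact key
end

section
/- Suppose all agents have identical additive valuations with strictly positive weights w_g > 0. Then any allocation A that globally minimizes the potential Φ(A) = Σ_{k=1}^n (Y_k − μ)^2 over the (finite) set of all allocations is EFX. In particular, an EFX allocation exists for any number of agents with identical additive valuations and strictly positive item values. -/
open Finset

/-- with identical additive valuations and strictly positive weights
(and at least one agent), every global minimizer of `Φ` over the finite set of
allocations is EFX; in particular, an EFX allocation exists. -/
theorem globalMin_Phi_is_EFX_and_EFX_exists {n m : ℕ} (hn : 0 < n)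
    (w : Fin m → ℝ) (hw : ∀ g, 0 < w g)
    (v : Fin n → Fin m → ℝ) (hv : ∀ i g, v i g = w g) :
    (∀ A : Fin m → Fin n, (∀ B : Fin m → Fin n, Phi w A ≤ Phi w B) → EFX v A) ∧
    (∃ A : Fin m → Fin n, EFX v A) := by
  have hmain : ∀ A : Fin m → Fin n, (∀ B : Fin m → Fin n, Phi w A ≤ Phi w B) → EFX v A := by
    intro A hA i j g hg
    by_contra hcon
    push_neg at hcon
    have hAg : A g = j := by simpa [bundle] using hg
    have huw : ∀ S : Finset (Fin m), util v i S = ∑ x ∈ S, w x := by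
      intro S; exact Finset.sum_congr rfl (fun x _ => hv i x)
    have herase : ∑ x ∈ (bundle A j).erase g, w x = Y w A j - w g := by
      rw [Finset.sum_erase_eq_sub hg]; rfl
    have hlt : Y w A i < Y w A j - w g := by
      have h := hcon; rw [huw, huw, herase] at h; exact h
    have hij : i ≠ j := by
      intro h; subst h
      have := hw g
      have : (Y w A i : ℝ) = Y w A i := rfl
      linarith [hw g, hlt]
    set μ := (∑ g : Fin m, w g) / (n : ℝ) with hμ
    set B := Function.update A g i with hB
    have hgi : g ∉ bundle A i := by simp [bundle, hAg, hij.symm]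
    have hbi : bundle B i = insert g (bundle A i) := by
      ext x
      by_cases hx : x = g <;>
        simp [bundle, hB, Function.update_apply, hx]
    have hbj : bundle B j = (bundle A j).erase g := by
      ext x
      by_cases hx : x = g <;>
        simp [bundle, hB, Function.update_apply, hx, hij]
    have hbk : ∀ k : Fin n, k ≠ i → k ≠ j → bundle B k = bundle A k := by
      intro k hki hkj
      ext x
      by_cases hx : x = g <;>
        simp [bundle, hB, Function.update_apply, hx, hAg, hki.symm, hkj.symm]
    have hYi : Y w B i = Y w A i + w g := by
      show ∑ x ∈ bundle B i, w x = _
      rw [hbi, Finset.sum_insert hgi]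
      show w g + Y w A i = _
      ring
    have hYj : Y w B j = Y w A j - w g := by
      show ∑ x ∈ bundle B j, w x = _
      rw [hbj, Finset.sum_erase_eq_sub hg]
      rfl
    have hYk : ∀ k : Fin n, k ≠ i → k ≠ j → Y w B k = Y w A k := by
      intro k hki hkj
      show ∑ x ∈ bundle B k, w x = _
      rw [hbk k hki hkj]
      rfl
    have hsum : Phi w B - Phi w A
        = ∑ k : Fin n, ((Y w B k - μ) ^ 2 - (Y w A k - μ) ^ 2) := by
      rw [Finset.sum_sub_distrib]; rfl
    have hsub : ∑ k : Fin n, ((Y w B k - μ) ^ 2 - (Y w A k - μ) ^ 2)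
        = ∑ k ∈ ({i, j} : Finset (Fin n)), ((Y w B k - μ) ^ 2 - (Y w A k - μ) ^ 2) := by
      refine (Finset.sum_subset (Finset.subset_univ _) ?_).symm
      intro k _ hk
      simp only [Finset.mem_insert, Finset.mem_singleton, not_or] at hk
      rw [hYk k hk.1 hk.2]
      ring
    have hpair : ∑ k ∈ ({i, j} : Finset (Fin n)), ((Y w B k - μ) ^ 2 - (Y w A k - μ) ^ 2)
        = ((Y w B i - μ) ^ 2 - (Y w A i - μ) ^ 2) + ((Y w B j - μ) ^ 2 - (Y w A j - μ) ^ 2) :=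
      Finset.sum_pair hij
    have hdiff : Phi w B - Phi w A = 2 * w g * (Y w A i - Y w A j + w g) := by
      rw [hsum, hsub, hpair, hYi, hYj]; ring
    have hneg : Phi w B - Phi w A < 0 := by
      rw [hdiff]
      have : Y w A i - Y w A j + w g < 0 := by linarith
      exact mul_neg_of_pos_of_neg (by linarith [hw g]) this
    linarith [hA B]
  refine ⟨hmain, ?_⟩
  haveI : Nonempty (Fin n) := Fin.pos_iff_nonempty.mp hn
  obtain ⟨A, -, hmin⟩ := Finset.exists_min_image (Finset.univ : Finset (Fin m → Fin n)) (Phi w)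
    Finset.univ_nonempty
  exact ⟨A, hmain A (fun B => hmin B (Finset.mem_univ B))⟩
end

section
/- Suppose all agents have identical additive valuations with strictly positive weights w_g > 0. Then from any initial allocation A_0 there exists a finite sequence of allocations A_0, A_1, ..., A_T such that each A_{t+1} is a single-transfer neighbor of A_t with Φ(A_{t+1}) < Φ(A_t), and the final allocation A_T is EFX. Equivalently, every strict-descent procedure on Φ using the single-transfer neighborhood terminates at an EFX allocation. -/
open Finset

lemma Y_spec {n m : ℕ} (w : Fin m → ℝ) (A : Fin m → Fin n) (k : Fin n) :
    Y w A k = ∑ g : Fin m, if A g = k then w g else 0 := by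
  rw [Y, bundle, Finset.sum_filter]

lemma Y_update {n m : ℕ} (w : Fin m → ℝ) (A : Fin m → Fin n) (g : Fin m) (i k : Fin n) :
    Y w (Function.update A g i) k =
      Y w A k + (if i = k then w g else 0) - (if A g = k then w g else 0) := by
  have h : ∑ g' : Fin m, ((if Function.update A g i g' = k then w g' else 0)
      - (if A g' = k then w g' else 0))
      = (if i = k then w g else 0) - (if A g = k then w g else 0) := by
    rw [Finset.sum_eq_single g]
    · simp
    · intro g' _ hne
      rw [Function.update_of_ne hne]
      simp
    · simp
  rw [Finset.sum_sub_distrib] at h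
  rw [Y_spec, Y_spec]
  linarith

lemma improve {n m : ℕ} (w : Fin m → ℝ) (hw : ∀ g, 0 < w g)
    (v : Fin n → Fin m → ℝ) (hv : ∀ i g, v i g = w g)
    (A : Fin m → Fin n) (h : ¬ EFX v A) :
    ∃ A', Neighbor A A' ∧ Phi w A' < Phi w A := by
  rw [EFX] at h
  push_neg at h
  obtain ⟨i, j, g, hg, hlt⟩ := h
  have hAg : A g = j := by simpa [bundle] using hg
  have hui : util v i (bundle A i) = Y w A i := by
    simp only [util, hv, Y]
  have huj : util v i ((bundle A j).erase g) = Y w A j - w g := by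
    simp only [util, hv]
    rw [Finset.sum_erase_eq_sub hg, Y]
  rw [hui, huj] at hlt
  have hij : i ≠ j := by
    rintro rfl
    have := hw g
    linarith
  refine ⟨Function.update A g i, ⟨g, i, by rw [hAg]; exact hij, rfl⟩, ?_⟩
  obtain ⟨μ, hμ⟩ : ∃ μ : ℝ, μ = (∑ g : Fin m, w g) / n := ⟨_, rfl⟩
  have hYi : Y w (Function.update A g i) i = Y w A i + w g := by
    rw [Y_update, hAg, if_pos rfl, if_neg (Ne.symm hij)]; ring
  have hYj : Y w (Function.update A g i) j = Y w A j - w g := by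
    rw [Y_update, hAg, if_pos rfl, if_neg hij]; ring
  have hYk : ∀ k, k ≠ i → k ≠ j → Y w (Function.update A g i) k = Y w A k := by
    intro k hki hkj
    rw [Y_update, hAg, if_neg (fun hh => hki hh.symm), if_neg (fun hh => hkj hh.symm)]
    ring
  have hsplit : ∀ B : Fin m → Fin n,
      ∑ k : Fin n, ((Y w B k - μ) ^ 2) =
      ((Y w B i - μ) ^ 2 + (Y w B j - μ) ^ 2) + ∑ k ∈ (univ.erase i).erase j, (Y w B k - μ) ^ 2 := by
    intro B
    rw [← Finset.add_sum_erase _ _ (Finset.mem_univ i),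
        ← Finset.add_sum_erase _ _ (Finset.mem_erase.mpr ⟨Ne.symm hij, Finset.mem_univ j⟩)]
    rw [Finset.erase_right_comm]
    ring
  have hrest : ∑ k ∈ (univ.erase i).erase j, (Y w (Function.update A g i) k - μ) ^ 2
      = ∑ k ∈ (univ.erase i).erase j, (Y w A k - μ) ^ 2 := by
    apply Finset.sum_congr rfl
    intro k hk
    rw [Finset.mem_erase, Finset.mem_erase] at hk
    rw [hYk k hk.2.1 hk.1]
  rw [Phi, Phi, ← hμ, hsplit, hsplit, hrest, hYi, hYj]
  have hwg := hw g
  nlinarith [hwg, hlt]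

lemma descent_aux {n m : ℕ} (w : Fin m → ℝ) (hw : ∀ g, 0 < w g)
    (v : Fin n → Fin m → ℝ) (hv : ∀ i g, v i g = w g) :
    ∀ (c : ℕ) (A : Fin m → Fin n),
      (univ.filter (fun B : Fin m → Fin n => Phi w B < Phi w A)).card ≤ c →
    ∃ (T : ℕ) (seq : ℕ → Fin m → Fin n), seq 0 = A ∧
      (∀ t < T, Neighbor (seq t) (seq (t + 1)) ∧ Phi w (seq (t + 1)) < Phi w (seq t)) ∧
      EFX v (seq T) := by
  intro c
  induction c with
  | zero =>
    intro A hc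
    by_cases hE : EFX v A
    · exact ⟨0, fun _ => A, rfl, by omega, hE⟩
    · obtain ⟨A', hN, hP⟩ := improve w hw v hv A hE
      exfalso
      have : A' ∈ univ.filter (fun B : Fin m → Fin n => Phi w B < Phi w A) := by
        simp [hP]
      have := Finset.card_pos.mpr ⟨A', this⟩
      omega
  | succ c ih =>
    intro A hc
    by_cases hE : EFX v A
    · exact ⟨0, fun _ => A, rfl, by omega, hE⟩
    · obtain ⟨A', hN, hP⟩ := improve w hw v hv A hE
      have hss : (univ.filter (fun B : Fin m → Fin n => Phi w B < Phi w A'))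
          ⊂ (univ.filter (fun B : Fin m → Fin n => Phi w B < Phi w A)) := by
        constructor
        · intro B hB
          simp only [Finset.mem_filter, Finset.mem_univ, true_and] at *
          linarith
        · intro hsub
          have : A' ∈ univ.filter (fun B : Fin m → Fin n => Phi w B < Phi w A) := by
            simp [hP]
          have := hsub this
          simp at this
      have hcard := Finset.card_lt_card hss
      obtain ⟨T, seq', h0, hstep, hEfx⟩ := ih A' (by omega)
      refine ⟨T + 1, fun t => Nat.casesOn t A seq', rfl, ?_, hEfx⟩
      intro t ht
      cases t with
      | zero => exact ⟨by simpa [h0] using hN, by simpa [h0] using hP⟩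
      | succ s => exact hstep s (by omega)


/-- with identical additive valuations and strictly positive weights,
from any initial allocation there is a finite sequence of single-transfer moves,
each strictly decreasing `Φ`, ending at an EFX allocation. -/
theorem strict_descent_reaches_EFX {n m : ℕ} (w : Fin m → ℝ) (hw : ∀ g, 0 < w g)
    (v : Fin n → Fin m → ℝ) (hv : ∀ i g, v i g = w g)
    (A0 : Fin m → Fin n) :
    ∃ (T : ℕ) (seq : ℕ → Fin m → Fin n), seq 0 = A0 ∧
      (∀ t < T, Neighbor (seq t) (seq (t + 1)) ∧ Phi w (seq (t + 1)) < Phi w (seq t)) ∧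
      EFX v (seq T) := by
  obtain ⟨T, seq, h0, hs, hE⟩ := descent_aux w hw v hv
    ((univ.filter (fun B : Fin m → Fin n => Phi w B < Phi w A0)).card) A0 le_rfl
  exact ⟨T, seq, h0, hs, hE⟩
end

section
/- Let there be n agents with arbitrary nonnegative additive valuations and m = n + 1 goods. Consider the sequential allocation in which agents pick in the order 1, 2, ..., n−1, n, n: at each turn the picking agent takes a good of maximum value to them among the goods not yet taken (so agents 1 through n−1 each receive one good, and agent n receives the last two remaining goods, each chosen as a most-valued remaining good at their turns). The resulting allocation is EFX. -/
/-!
Agent `i < n - 1` picks only at turn `i`, while the last agent picks at turns `n - 1` and `n`.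
So removing any good from a bundle leaves at most one good, and such a good exists only in the
last agent's bundle, where it was taken at turn `n - 1` or `n`, no earlier than any agent's
first pick. When agent `i` picked, it was still available, hence it is worth at most that
first pick to `i`, and so at most `u_i(A_i)`.
-/

open Finset

theorem EFX_of_card_bundle_le_two {n m : ℕ} {v : Fin n → Fin m → ℝ} {A : Fin m → Fin n}
    (hv : ∀ i g, 0 ≤ v i g) (hcard : ∀ j, #(bundle A j) ≤ 2)
    (hle : ∀ i j, ∀ g ∈ bundle A j, ∀ h ∈ (bundle A j).erase g, v i h ≤ util v i (bundle A i)) :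
    EFX v A := by
  intro i j g hg
  have hcard_erase : #((bundle A j).erase g) ≤ 1 := by
    rw [card_erase_of_mem hg]
    have := hcard j
    omega
  have hutil_nonneg : 0 ≤ util v i (bundle A i) := sum_nonneg fun g _ => hv i g
  calc util v i ((bundle A j).erase g)
      ≤ #((bundle A j).erase g) • util v i (bundle A i) := sum_le_card_nsmul _ _ _ (hle i j g hg)
    _ ≤ 1 • util v i (bundle A i) := by gcongr
    _ = util v i (bundle A i) := one_nsmul _

theorem bundle_comp_symm {n m : ℕ} (e : Equiv.Perm (Fin m)) (A : Fin m → Fin n) (j : Fin n) :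
    bundle (fun g => A (e.symm g)) j = (bundle A j).map e.toEmbedding := by
  ext g
  simp [bundle]

/-- Agents and turns are `0`-indexed: the agents pick in the order `0, 1, …, n - 2, n - 1, n - 1`. -/
def IsPickingSequence {n : ℕ} (p : Fin (n + 1) → Fin n) : Prop :=
  ∀ t : Fin (n + 1), (p t : ℕ) = min (t : ℕ) (n - 1)

namespace IsPickingSequence

variable {n : ℕ} {p : Fin (n + 1) → Fin n}

theorem apply_castSucc (hp : IsPickingSequence p) (i : Fin n) : p i.castSucc = i := by
  ext
  rw [hp, Fin.val_castSucc]
  omega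

theorem bundle_subset (hp : IsPickingSequence p) (j : Fin n) :
    bundle p j ⊆ {j.castSucc, Fin.last n} := by
  intro t ht
  have hpt : ((p t : Fin n) : ℕ) = j := congrArg Fin.val (mem_filter.mp ht).2
  have := hp t
  simp only [mem_insert, mem_singleton, Fin.ext_iff, Fin.val_castSucc, Fin.val_last]
  omega

theorem pred_le_of_apply_eq (hp : IsPickingSequence p) {s t : Fin (n + 1)} (hst : p s = p t)
    (hne : s ≠ t) : n - 1 ≤ (s : ℕ) := by
  have hs := hp s
  have ht := hp t
  rw [hst] at hs
  have : (s : ℕ) ≠ t := Fin.val_ne_of_ne hne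
  omega

end IsPickingSequence

theorem le_util_bundle_of_greedy {n m : ℕ} {v : Fin n → Fin m → ℝ} (hv : ∀ i g, 0 ≤ v i g)
    {pick : Equiv.Perm (Fin m)} {p : Fin m → Fin n}
    (hgreedy : ∀ t s : Fin m, t ≤ s → v (p t) (pick s) ≤ v (p t) (pick t))
    {i : Fin n} {t s : Fin m} (hpt : p t = i) (hts : t ≤ s) :
    v i (pick s) ≤ util v i (bundle (fun g => p (pick.symm g)) i) := by
  have hmem : pick t ∈ bundle (fun g => p (pick.symm g)) i := by simp [bundle, hpt]
  calc v i (pick s) ≤ v i (pick t) := hpt ▸ hgreedy t s hts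
    _ ≤ util v i (bundle (fun g => p (pick.symm g)) i) :=
      single_le_sum (fun g _ => hv i g) hmem

theorem roundRobin_is_EFX_general {n : ℕ}
    (v : Fin n → Fin (n + 1) → ℝ) (hv : ∀ i g, 0 ≤ v i g)
    (pick : Equiv.Perm (Fin (n + 1)))
    (p : Fin (n + 1) → Fin n) (hp : ∀ t : Fin (n + 1), (p t : ℕ) = min t (@Nat.cast (Fin (n + 1)) (Fin.NatCast.instNatCast (n + 1)) (n - 1)))
    (hgreedy : ∀ t s : Fin (n + 1), t ≤ s → v (p t) (pick s) ≤ v (p t) (pick t)) :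
    EFX v (fun g => p (pick.symm g)) := by
  have hseq : IsPickingSequence p := fun t => by
    rw [hp, Fin.coe_min, Fin.val_natCast, Nat.mod_eq_of_lt (by omega)]
  refine EFX_of_card_bundle_le_two hv (fun j => ?_) fun i j g hg h hh => ?_
  · rw [bundle_comp_symm, card_map]
    exact (card_le_card (hseq.bundle_subset j)).trans card_le_two
  · obtain ⟨hhg, hhj⟩ := mem_erase.mp hh
    have hshared : p (pick.symm h) = p (pick.symm g) :=
      (mem_filter.mp hhj).2.trans (mem_filter.mp hg).2.symm
    have hturn := hseq.pred_le_of_apply_eq hshared (pick.symm.injective.ne hhg)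
    have hle : i.castSucc ≤ pick.symm h := by
      rw [Fin.le_def, Fin.val_castSucc]
      omega
    simpa using le_util_bundle_of_greedy hv hgreedy (hseq.apply_castSucc i) hle

/-- with `n` agents, `m = n + 1` goods and nonnegative additive
valuations, the sequential allocation in which the agents pick in the order
`1, 2, …, n−1, n, n` (at each turn the picking agent takes a most-valued remaining
good) is EFX.

Here `pick : Equiv.Perm (Fin (n+1))` lists the goods in the order they are taken
(`pick t` is the good taken at turn `t`), `p t` is the agent picking at turn `t`
(0-indexed: `p t = min t (n−1)`, so agents `0, …, n−2` pick once and agent `n−1`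
picks at the last two turns), and the greedy hypothesis says the good taken at
turn `t` is weakly preferred by agent `p t` to every good still remaining (those
taken at later turns). The resulting allocation assigns good `pick t` to `p t`. -/
theorem roundRobin_is_EFX {n : ℕ} (hn : 0 < n)
    (v : Fin n → Fin (n + 1) → ℝ) (hv : ∀ i g, 0 ≤ v i g)
    (pick : Equiv.Perm (Fin (n + 1)))
    (p : Fin (n + 1) → Fin n) (hp : ∀ t : Fin (n + 1), (p t : ℕ) = min t (@Nat.cast (Fin (n + 1)) (Fin.NatCast.instNatCast (n + 1)) (n - 1)))
    (hgreedy : ∀ t s : Fin (n + 1), t ≤ s → v (p t) (pick s) ≤ v (p t) (pick t)) :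
    EFX v (fun g => p (pick.symm g)) :=
  roundRobin_is_EFX_general v hv pick p hp hgreedy
end
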